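/- Let k be a positive integer, n a positive integer, and σ > 0. Then ∫_0^∞ f_{χ²}(x; n·k) · Q(√x/(2σ)) dx ≤ (1 + 1/(4σ²))^{−n·k/2} = 2^{−n·(k/2)·log₂(1 + SNR₂/(4k))}, where SNR₂ = k/σ². Hence, for i.i.d. channel inputs X_1,…,X_n each with density f_X(·;k) (so that ∑_{i=1}^n X_i² is chi-squared with n·k degrees of freedom), the detection error probability ε_n = E[Q(√(∑ X_i²)/(2σ))] satisfies ε_n ≤ 2^{−n·E†} with E† = (k/2)·log₂(1 + SNR₂/(4k)), which is the achievable detection error exponent of Theorem 2. -/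

import Mathlib

open Real MeasureTheory

/-- The Gaussian Q-function: upper-tail probability of the standard normal distribution. -/
noncomputable def gaussQ (x : ℝ) : ℝ :=
  ∫ t in Set.Ioi x, (Real.sqrt (2 * Real.pi))⁻¹ * Real.exp (-t ^ 2 / 2)

/-- The chi-squared density with `m` degrees of freedom. -/
noncomputable def chiSqPDF (m x : ℝ) : ℝ :=
  if 0 < x then x ^ (m / 2 - 1) * Real.exp (-x / 2) / (2 ^ (m / 2) * Real.Gamma (m / 2))
  else 0

lemma gaussQ_nonneg (x : ℝ) : 0 ≤ gaussQ x := by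
  unfold gaussQ
  apply integral_nonneg
  intro t
  positivity

lemma chiSqPDF_nonneg {m : ℝ} (hm : 0 < m) (x : ℝ) : 0 ≤ chiSqPDF m x := by
  unfold chiSqPDF
  split_ifs with h
  · have hΓ : 0 < Real.Gamma (m / 2) := Real.Gamma_pos_of_pos (by positivity)
    positivity
  · exact le_rfl

/-- Chernoff-type bound for the Q-function. -/
lemma gaussQ_le_exp {y : ℝ} (hy : 0 ≤ y) : gaussQ y ≤ Real.exp (-y ^ 2 / 2) := by
  set c : ℝ := (Real.sqrt (2 * Real.pi))⁻¹ with hc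
  have hπ : (0 : ℝ) < Real.sqrt (2 * Real.pi) := Real.sqrt_pos.2 (by positivity)
  set E : ℝ := Real.exp (-y ^ 2 / 2) with hE
  have hg : Integrable (fun t : ℝ => Real.exp (-(1/2) * (t - y) ^ 2)) :=
    (integrable_exp_neg_mul_sq (by norm_num : (0:ℝ) < 1/2)).comp_sub_right y
  have h1 : gaussQ y ≤
      ∫ t in Set.Ioi y, c * (E * Real.exp (-(1/2) * (t - y) ^ 2)) := by
    unfold gaussQ
    refine integral_mono_of_nonneg ?_ ?_ ?_
    · filter_upwards with t; positivity
    · exact ((hg.const_mul E).const_mul c).restrict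
    · filter_upwards [ae_restrict_mem measurableSet_Ioi] with t ht
      have hty : y < t := Set.mem_Ioi.mp ht
      have h2 : Real.exp (-t ^ 2 / 2) ≤ E * Real.exp (-(1/2) * (t - y) ^ 2) := by
        rw [hE, ← Real.exp_add]
        apply Real.exp_le_exp.2
        nlinarith
      exact mul_le_mul_of_nonneg_left h2 (by positivity)
  have h3 : (∫ t in Set.Ioi y, c * (E * Real.exp (-(1/2) * (t - y) ^ 2)))
      = c * E * ∫ t in Set.Ioi y, Real.exp (-(1/2) * (t - y) ^ 2) := by
    rw [integral_const_mul, integral_const_mul, mul_assoc]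
  have h4 : (∫ t in Set.Ioi y, Real.exp (-(1/2) * (t - y) ^ 2))
      ≤ ∫ t : ℝ, Real.exp (-(1/2) * (t - y) ^ 2) := by
    apply setIntegral_le_integral hg
    filter_upwards with t
    positivity
  have h5 : (∫ t : ℝ, Real.exp (-(1/2) * (t - y) ^ 2)) = Real.sqrt (2 * Real.pi) := by
    rw [integral_sub_right_eq_self (fun t : ℝ => Real.exp (-(1/2) * t ^ 2)) y,
      integral_gaussian]
    rw [show Real.pi / (1/2) = 2 * Real.pi by ring]
  have hcE : 0 ≤ c * E := by positivity
  calc gaussQ y ≤ c * E * ∫ t in Set.Ioi y, Real.exp (-(1/2) * (t - y) ^ 2) := by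
        rw [← h3]; exact h1
    _ ≤ c * E * Real.sqrt (2 * Real.pi) := by
        rw [← h5]; exact mul_le_mul_of_nonneg_left h4 hcE
    _ = E := by
        rw [hc]; field_simp

/-- Detection error exponent of Theorem 2: for transmitted power chi-squared with `n·k`
degrees of freedom (i.i.d. inputs with density `f_X(·;k)`), the detection error probability
`ε_n = ∫_0^∞ f_{χ²}(x;nk)·Q(√x/(2σ)) dx` satisfies
`ε_n ≤ (1+1/(4σ²))^{−nk/2} = 2^{−n·(k/2)·log₂(1+SNR₂/(4k))}` with `SNR₂ = k/σ²`. -/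
theorem chiSq_nk_detection_error_bound (k : ℕ) (hk : 0 < k) (n : ℕ) (hn : 0 < n)
    (σ : ℝ) (hσ : 0 < σ) :
    (∫ x in Set.Ioi (0 : ℝ), chiSqPDF (n * k) x * gaussQ (Real.sqrt x / (2 * σ)))
        ≤ (1 + 1 / (4 * σ ^ 2)) ^ (-((n : ℝ) * k) / 2) ∧
      (1 + 1 / (4 * σ ^ 2)) ^ (-((n : ℝ) * k) / 2)
        = 2 ^ (-(n : ℝ) * ((k : ℝ) / 2 * Real.logb 2 (1 + ((k : ℝ) / σ ^ 2) / (4 * k)))) := by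
  have hσ2 : (0:ℝ) < σ ^ 2 := by positivity
  have hA : (0:ℝ) < 1 + 1 / (4 * σ ^ 2) := by positivity
  set m : ℝ := (n : ℝ) * k with hm
  have hn0 : (0:ℝ) < (n:ℝ) := Nat.cast_pos.2 hn
  have hk0 : (0:ℝ) < (k:ℝ) := Nat.cast_pos.2 hk
  have hm0 : 0 < m := by rw [hm]; positivity
  set a : ℝ := m / 2 with ha
  have ha0 : 0 < a := by positivity
  set r : ℝ := 1/2 + 1/(8 * σ ^ 2) with hr
  have hr0 : 0 < r := by positivity
  have hΓ : 0 < Real.Gamma a := Real.Gamma_pos_of_pos ha0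
  have h2a : (0:ℝ) < (2:ℝ) ^ a := rpow_pos_of_pos two_pos a
  have hra : (0:ℝ) < r ^ a := rpow_pos_of_pos hr0 a
  have h2r : 2 * r = 1 + 1 / (4 * σ ^ 2) := by rw [hr]; field_simp; ring
  constructor
  · -- the inequality
    have hIntPow : IntegrableOn (fun x : ℝ => x ^ (a - 1) * Real.exp (-(r * x)))
        (Set.Ioi 0) := by
      have h := integrableOn_rpow_mul_exp_neg_mul_rpow (p := 1) (s := a - 1) (b := r)
        (by linarith) one_pos hr0
      refine h.congr_fun (fun x hx => ?_) measurableSet_Ioi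
      beta_reduce
      rw [Real.rpow_one, neg_mul]
    have hEq : ∀ x ∈ Set.Ioi (0:ℝ),
        (2 ^ a * Real.Gamma a)⁻¹ * (x ^ (a - 1) * Real.exp (-(r * x)))
          = chiSqPDF m x * Real.exp (-x / (8 * σ ^ 2)) := by
      intro x hx
      have hx0 : (0:ℝ) < x := hx
      simp only [chiSqPDF, if_pos hx0]
      rw [← ha]
      have hx2 : -(r * x) = -x / 2 + -x / (8 * σ ^ 2) := by rw [hr]; field_simp; ring
      rw [hx2, Real.exp_add]
      field_simp
    have hIntg : IntegrableOn (fun x : ℝ => chiSqPDF m x * Real.exp (-x / (8 * σ ^ 2)))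
        (Set.Ioi 0) := by
      have h1 : IntegrableOn
          (fun x : ℝ => (2 ^ a * Real.Gamma a)⁻¹ * (x ^ (a - 1) * Real.exp (-(r * x))))
          (Set.Ioi 0) := hIntPow.const_mul _
      exact h1.congr_fun hEq measurableSet_Ioi
    have hmono : (∫ x in Set.Ioi (0:ℝ), chiSqPDF m x * gaussQ (Real.sqrt x / (2 * σ)))
        ≤ ∫ x in Set.Ioi (0:ℝ), chiSqPDF m x * Real.exp (-x / (8 * σ ^ 2)) := by
      refine integral_mono_of_nonneg ?_ hIntg ?_
      · filter_upwards with x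
        exact mul_nonneg (chiSqPDF_nonneg hm0 x) (gaussQ_nonneg _)
      · filter_upwards [ae_restrict_mem measurableSet_Ioi] with x hx
        have hx0 : (0:ℝ) < x := hx
        have hq : gaussQ (Real.sqrt x / (2 * σ)) ≤ Real.exp (-x / (8 * σ ^ 2)) := by
          have h := gaussQ_le_exp (y := Real.sqrt x / (2 * σ)) (by positivity)
          have hxx : -(Real.sqrt x / (2 * σ)) ^ 2 / 2 = -x / (8 * σ ^ 2) := by
            rw [div_pow, sq_sqrt hx0.le]
            field_simp
            ring_nf
          rwa [hxx] at h
        exact mul_le_mul_of_nonneg_left hq (chiSqPDF_nonneg hm0 x)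
    have heval : (∫ x in Set.Ioi (0:ℝ), chiSqPDF m x * Real.exp (-x / (8 * σ ^ 2)))
        = (1 + 1 / (4 * σ ^ 2)) ^ (-m / 2) := by
      have hcongr : (∫ x in Set.Ioi (0:ℝ), chiSqPDF m x * Real.exp (-x / (8 * σ ^ 2)))
          = ∫ x in Set.Ioi (0:ℝ),
              (2 ^ a * Real.Gamma a)⁻¹ * (x ^ (a - 1) * Real.exp (-(r * x))) := by
        exact (setIntegral_congr_fun measurableSet_Ioi hEq).symm
      rw [hcongr, integral_const_mul, Real.integral_rpow_mul_exp_neg_mul_Ioi ha0 hr0]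
      have key : (2 ^ a * Real.Gamma a)⁻¹ * ((1 / r) ^ a * Real.Gamma a)
          = (2 * r) ^ (-a) := by
        rw [Real.rpow_neg (by positivity), Real.mul_rpow two_pos.le hr0.le,
          one_div, Real.inv_rpow hr0.le, mul_inv]
        field_simp
      rw [key, h2r]
      congr 1
      rw [ha]
      ring
    exact hmono.trans heval.le
  · -- the equality of exponents
    have hsimp : ((k:ℝ) / σ ^ 2) / (4 * k) = 1 / (4 * σ ^ 2) := by
      rw [div_div, div_eq_div_iff (by positivity) (by positivity)]
      ring
    rw [hsimp]
    have hL : -(n : ℝ) * ((k : ℝ) / 2 * Real.logb 2 (1 + 1 / (4 * σ ^ 2)))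
        = Real.logb 2 (1 + 1 / (4 * σ ^ 2)) * (-m / 2) := by rw [hm]; ring
    rw [hL, Real.rpow_mul two_pos.le, Real.rpow_logb two_pos (by norm_num) hA]
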